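/- arXiv:2308.09579 — 2 statements merged into one kernel-verified Lean document; each statement's English description precedes it below -/
import Mathlib

section
/- Let k be a field and G a finite group. If M is a kG-module such that Hom_{kG}(k, M) is finite dimensional, then M has a finite-dimensional submodule M' such that Hom_{kG}(k, M/M') = 0 and all composition factors of M' are isomorphic to the trivial module k. -/
/-!
Let `I ⊆ kG` be the augmentation ideal, spanned by the elements `g - 1`; it is a right ideal,
and the vectors of a `kG`-module killed by `I` are exactly the `G`-fixed vectors. The powers
`I ^ (n + 1)` form a descending chain of subspaces of the finite-dimensional algebra `kG`, so
`I ^ (n + 2) = I ^ (n + 1)` for some `n`; take `M'` to be the vectors killed by `I ^ (n + 1)`.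
If `m` is killed by `I ^ (j + 1) = I * I ^ j`, then `a ↦ a • m` maps `I ^ j` into `M ^ G`; this
embeds (vectors killed by `I ^ (j + 1)`) modulo (vectors killed by `I ^ j`) into
`Hom_k(I ^ j, M ^ G)`, so `M'` is finite dimensional. A vector fixed modulo `M'` is killed by
`I ^ (n + 2) = I ^ (n + 1)`. Finally, a module without nonzero fixed vectors has no nonzero vector
killed by any power of `I`; so a simple subquotient of `M'`, being killed by `I ^ (n + 1)`, has a
nonzero fixed vector, and since the fixed vectors form a submodule, all its vectors are fixed.
-/

namespace Submodule

section Ring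

variable {R A : Type*} [CommRing R] [Ring A] [Algebra R A]
  (M : Type*) [AddCommGroup M] [Module R M] [Module A M] [IsScalarTower R A M]

def annihilatedBy (N : Submodule R A) : Submodule R M where
  carrier := {m | ∀ a ∈ N, a • m = 0}
  add_mem' ha hb a h := by rw [smul_add, ha a h, hb a h, add_zero]
  zero_mem' a _ := smul_zero a
  smul_mem' c m hm a h := by rw [smul_comm, hm a h, smul_zero]

def annihilatedByRightIdeal (N : Submodule R A) (hN : N * ⊤ ≤ N) : Submodule A M where
  toAddSubmonoid := (annihilatedBy M N).toAddSubmonoid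
  smul_mem' a m hm b hb := by rw [← mul_smul]; exact hm _ (hN (mul_mem_mul hb mem_top))

variable {M}

theorem restrictScalars_annihilatedByRightIdeal (N : Submodule R A) (hN : N * ⊤ ≤ N) :
    (annihilatedByRightIdeal M N hN).restrictScalars R = annihilatedBy M N := rfl

theorem annihilatedBy_one : annihilatedBy M (1 : Submodule R A) = ⊥ :=
  eq_bot_iff.2 fun m hm => (mem_bot R).2 <| by simpa using hm 1 (one_le.1 le_rfl)

theorem mem_annihilatedBy_mul {N N' : Submodule R A} {m : M} :
    m ∈ annihilatedBy M (N * N') ↔ ∀ a ∈ N', a • m ∈ annihilatedBy M N := by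
  refine ⟨fun hm a ha b hb => by rw [← mul_smul]; exact hm _ (mul_mem_mul hb ha),
    fun hm c hc => ?_⟩
  refine Submodule.mul_induction_on hc (fun b hb a ha => ?_) fun x y hx hy => ?_
  · rw [mul_smul]; exact hm a ha b hb
  · rw [add_smul, hx, hy, add_zero]

theorem annihilatedBy_pow_eq_bot {I : Submodule R A} (h : annihilatedBy M I = ⊥) (n : ℕ) :
    annihilatedBy M (I ^ n) = ⊥ := by
  induction n with
  | zero => exact annihilatedBy_one
  | succ n ih =>
    refine eq_bot_iff.2 fun m hm => ?_
    rw [← ih]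
    intro a ha
    rw [pow_succ', mem_annihilatedBy_mul, h] at hm
    exact (mem_bot R).1 (hm a ha)

theorem annihilatedBy_eq_top_of_isSimpleModule [IsSimpleModule A M] {I : Submodule R A}
    (hI : I * ⊤ ≤ I) {n : ℕ} (hn : annihilatedBy M (I ^ n) = ⊤) :
    annihilatedBy M I = ⊤ := by
  have := IsSimpleModule.nontrivial A M
  rw [← restrictScalars_annihilatedByRightIdeal I hI, restrictScalars_eq_top_iff]
  refine (eq_bot_or_eq_top _).resolve_left fun h =>
    top_ne_bot (hn.symm.trans (annihilatedBy_pow_eq_bot ?_ n))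
  rw [← restrictScalars_annihilatedByRightIdeal I hI, h, restrictScalars_bot]

theorem annihilatedBy_quotient_eq_bot {I J : Submodule R A} (hJ : J * ⊤ ≤ J) (h : J ≤ J * I) :
    annihilatedBy (M ⧸ annihilatedByRightIdeal M J hJ) I = ⊥ := by
  refine eq_bot_iff.2 fun x hx => ?_
  obtain ⟨m, rfl⟩ := Quotient.mk_surjective _ x
  have hm : m ∈ annihilatedBy M (J * I) := mem_annihilatedBy_mul.2 fun a ha =>
    (Quotient.mk_eq_zero _).1 (hx a ha)
  exact (mem_bot R).2 ((Quotient.mk_eq_zero _).2 fun a ha => hm a (h ha))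

theorem annihilatedBy_subquotient_eq_top {N : Submodule R A} {P Q : Submodule A M}
    (hQ : Q.restrictScalars R ≤ annihilatedBy M N) :
    annihilatedBy (Q ⧸ P.comap Q.subtype) N = ⊤ := by
  refine eq_top_iff.2 fun x _ a ha => ?_
  obtain ⟨q, rfl⟩ := Quotient.mk_surjective _ x
  rw [← Quotient.mk_smul, (Subtype.ext (hQ q.2 a ha) : a • q = 0), Quotient.mk_zero]

theorem pow_succ_mul_top_le {I : Submodule R A} (hI : I * ⊤ ≤ I) (n : ℕ) :
    I ^ (n + 1) * ⊤ ≤ I ^ (n + 1) := by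
  rw [pow_succ, mul_assoc]
  exact mul_le_mul_right hI _

theorem exists_pow_succ_succ_eq [IsArtinian R A] {I : Submodule R A} (hI : I * I ≤ I) :
    ∃ n, I ^ (n + 2) = I ^ (n + 1) := by
  have hanti : Antitone fun n => I ^ (n + 1) := antitone_nat_of_succ_le fun n => by
    rw [pow_succ _ (n + 1), pow_succ, mul_assoc]
    exact mul_le_mul_right hI _
  obtain ⟨n, hn⟩ :=
    IsArtinian.monotone_stabilizes ⟨fun n => OrderDual.toDual (I ^ (n + 1)), hanti⟩
  exact ⟨n, (hn (n + 1) n.le_succ).symm⟩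

end Ring

section Field

variable {K A : Type*} [Field K] [Ring A] [Algebra K A]
  {M : Type*} [AddCommGroup M] [Module K M] [Module A M] [IsScalarTower K A M]

theorem finiteDimensional_annihilatedBy_mul {I N : Submodule K A} [FiniteDimensional K N]
    [FiniteDimensional K (annihilatedBy M I)] [FiniteDimensional K (annihilatedBy M N)] :
    FiniteDimensional K (annihilatedBy M (I * N)) := by
  let ψ : annihilatedBy M (I * N) →ₗ[K] N →ₗ[K] annihilatedBy M I :=
    LinearMap.mk₂ K (fun m a => ⟨(a : A) • (m : M), mem_annihilatedBy_mul.1 m.2 a a.2⟩)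
      (fun _ _ _ => Subtype.ext (smul_add _ _ _)) (fun _ _ _ => Subtype.ext (smul_comm _ _ _))
      (fun _ _ _ => Subtype.ext (add_smul _ _ _)) (fun _ _ _ => Subtype.ext (smul_assoc _ _ _))
  let ι : LinearMap.ker ψ →ₗ[K] annihilatedBy M N :=
    ((annihilatedBy M (I * N)).subtype ∘ₗ (LinearMap.ker ψ).subtype).codRestrict _
      fun m a ha => congr_arg Subtype.val (LinearMap.congr_fun m.2 ⟨a, ha⟩)
  have : FiniteDimensional K (LinearMap.ker ψ) :=
    Module.Finite.of_injective ι fun _ _ h => Subtype.ext (Subtype.ext (congr_arg Subtype.val h :))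
  have : FiniteDimensional K (annihilatedBy M (I * N) ⧸ LinearMap.ker ψ) :=
    Module.Finite.equiv ψ.quotKerEquivRange.symm
  exact Module.Finite.of_submodule_quotient (LinearMap.ker ψ)

theorem finiteDimensional_annihilatedBy_pow [FiniteDimensional K A] {I : Submodule K A}
    [FiniteDimensional K (annihilatedBy M I)] (n : ℕ) :
    FiniteDimensional K (annihilatedBy M (I ^ n)) := by
  induction n with
  | zero => rw [pow_zero, annihilatedBy_one]; infer_instance
  | succ n ih => rw [pow_succ']; exact finiteDimensional_annihilatedBy_mul

end Field

end Submodule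

open Submodule

namespace MonoidAlgebra

variable (k G : Type*) [Field k] [Group G]

noncomputable def augmentationIdeal : Submodule k (MonoidAlgebra k G) :=
  span k (Set.range fun g => of k G g - 1)

variable {k G}

theorem of_sub_one_mem_augmentationIdeal (g : G) : of k G g - 1 ∈ augmentationIdeal k G :=
  subset_span ⟨g, rfl⟩

theorem augmentationIdeal_mul_top_le : augmentationIdeal k G * ⊤ ≤ augmentationIdeal k G := by
  have htop : span k (Set.range (of k G)) = ⊤ := by
    convert (MonoidAlgebra.basis G k).span_eq
    ext g
    simp
  rw [← htop, augmentationIdeal, span_mul_span, span_le]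
  rintro _ ⟨_, ⟨g, rfl⟩, _, ⟨h, rfl⟩, rfl⟩
  have : (of k G g - 1) * of k G h = (of k G (g * h) - 1) - (of k G h - 1) := by
    rw [map_mul]; noncomm_ring
  exact (this ▸ sub_mem (of_sub_one_mem_augmentationIdeal _)
    (of_sub_one_mem_augmentationIdeal _) :)

theorem mem_annihilatedBy_augmentationIdeal {M : Type*} [AddCommGroup M] [Module k M]
    [Module (MonoidAlgebra k G) M] [IsScalarTower k (MonoidAlgebra k G) M] {m : M} :
    m ∈ annihilatedBy M (augmentationIdeal k G) ↔ ∀ g : G, of k G g • m = m := by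
  simp_rw [← sub_eq_zero (b := m)]
  refine ⟨fun hm g => ?_, fun hm a ha => ?_⟩
  · simpa [sub_smul] using hm _ (of_sub_one_mem_augmentationIdeal g)
  · induction ha using span_induction with
    | mem _ hx => obtain ⟨g, rfl⟩ := hx; simpa [sub_smul] using hm g
    | zero => exact zero_smul _ _
    | add _ _ _ _ hx hy => rw [add_smul, hx, hy, add_zero]
    | smul c _ _ hx => rw [smul_assoc, hx, smul_zero]

end MonoidAlgebra

open MonoidAlgebra in
/-- Let `k` be a field, `G` a finite group, and `M` a `kG`-module such that
`Hom_{kG}(k, M) ≅ M^G` is finite dimensional (encoded: the fixed points lie in the span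
of finitely many vectors).  Then `M` has a finite-dimensional `kG`-submodule `M'` such
that `Hom_{kG}(k, M/M') = 0` (no nonzero fixed points in the quotient) and all
composition factors of `M'` (i.e. simple subquotients `Q/P` with `P ≤ Q ≤ M'`) carry
the trivial `G`-action, i.e. are isomorphic to the trivial module `k`. -/
theorem stmt7 (k : Type) [Field k] (G : Type) [Group G] [Finite G]
    (M : Type) [AddCommGroup M] [Module k M] [Module (MonoidAlgebra k G) M]
    [IsScalarTower k (MonoidAlgebra k G) M]
    (hfin : ∃ s : Finset M, ∀ m : M, (∀ g : G, MonoidAlgebra.of k G g • m = m) →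
      m ∈ Submodule.span k (s : Set M)) :
    ∃ M' : Submodule (MonoidAlgebra k G) M,
      FiniteDimensional k ↥(M'.restrictScalars k) ∧
      (∀ x : M ⧸ M', (∀ g : G, MonoidAlgebra.of k G g • x = x) → x = 0) ∧
      (∀ (P Q : Submodule (MonoidAlgebra k G) M), P ≤ Q → Q ≤ M' →
        IsSimpleModule (MonoidAlgebra k G) (↥Q ⧸ P.comap Q.subtype) →
        ∀ (g : G) (x : ↥Q ⧸ P.comap Q.subtype), MonoidAlgebra.of k G g • x = x) := by
  obtain ⟨s, hs⟩ := hfin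
  have hI := augmentationIdeal_mul_top_le (k := k) (G := G)
  have : FiniteDimensional k (annihilatedBy M (augmentationIdeal k G)) :=
    finiteDimensional_of_le fun m hm => hs m (mem_annihilatedBy_augmentationIdeal.1 hm)
  obtain ⟨n, hn⟩ := exists_pow_succ_succ_eq ((mul_le_mul_right le_top _).trans hI)
  refine ⟨annihilatedByRightIdeal M _ (pow_succ_mul_top_le hI n),
    finiteDimensional_annihilatedBy_pow (n + 1), fun x hx => ?_, fun P Q _ hQ _ g x => ?_⟩
  · have h := annihilatedBy_quotient_eq_bot (M := M) (I := augmentationIdeal k G)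
      (pow_succ_mul_top_le hI n) (by rw [← pow_succ, hn])
    exact (mem_bot k).1 (h ▸ mem_annihilatedBy_augmentationIdeal.2 hx)
  · have h := annihilatedBy_eq_top_of_isSimpleModule hI
      (annihilatedBy_subquotient_eq_top (P := P) (Q := Q) hQ)
    exact mem_annihilatedBy_augmentationIdeal.1 (h ▸ mem_top) g
end

section
/- Let k be a field of characteristic 3 containing the group algebra relations for G = ℤ/3^r × Σ₃, with C = ⟨g⟩ cyclic of order 3^r and D = ⟨h, t | h³ = t² = 1, tht = h⁻¹⟩. Set Z = g - g² and Y = h - h² in kG. Then kG is generated as a k-algebra by Z, Y, t subject to the relations Z^{3^r} = 0, Y³ = 0, ZY = YZ, tZ = Zt, tY = -Yt, t² = 1. -/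
/-!
In characteristic 3 the Frobenius `a ↦ a ^ 3` is additive on commuting elements, so
`(g - g²) ^ 3 ^ r = g ^ 3 ^ r - (g ^ 3 ^ r) ^ 2 = 0`, and likewise `Y ^ 3 = 0`. Conversely
`u = g - 1` is nilpotent and `u + u² = -(g - g²)`; expanding
`(u + u²) ^ m = u ^ m + (higher powers of u)` and inducting downwards on `m` puts every power of
`u`, hence `g`, into `k[Z]`. The same argument gives `h ∈ k[Y]`, and `g, h, t` generate `G`.
Finally `t h t = h²` makes `t` anticommute with `Y`.
-/

theorem sq_add_self_pow {A : Type*} [Ring A] (u : A) (m : ℕ) :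
    (u ^ 2 + u) ^ m =
      u ^ m + ∑ j ∈ Finset.range m, u ^ (m + (j + 1)) * (m.choose (j + 1) : A) := by
  rw [((Commute.refl u).pow_left 2).add_pow, Finset.sum_range_succ', add_comm]
  simp only [← pow_mul, ← pow_add, pow_zero, Nat.sub_zero, Nat.choose_zero_right, Nat.cast_one,
    one_mul, mul_one]
  congr 1
  refine Finset.sum_congr rfl fun j hj => ?_
  rw [show 2 * (j + 1) + (m - (j + 1)) = m + (j + 1) by grind]

theorem sub_sq_pow_expChar_pow_eq_zero {A : Type*} [Ring A] (p : ℕ) [ExpChar A p] {x : A}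
    {n : ℕ} (hx : x ^ p ^ n = 1) : (x - x ^ 2) ^ p ^ n = 0 := by
  rw [sub_pow_expChar_pow_of_commute p n ((Commute.refl x).pow_right 2), ← pow_mul, mul_comm,
    pow_mul, hx, one_pow, sub_self]

theorem mul_sub_sq_eq_neg_sub_sq_mul {A : Type*} [Ring A] {x y : A} (hx : x ^ 3 = 1)
    (hyx : y * x = x ^ 2 * y) : y * (x - x ^ 2) = -((x - x ^ 2) * y) := by
  have hyx2 : y * x ^ 2 = x * y := by
    rw [sq, ← mul_assoc, hyx, mul_assoc, hyx, ← mul_assoc, ← pow_add,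
      show 2 + 2 = 3 + 1 from rfl, pow_succ, hx, one_mul]
  rw [mul_sub, sub_mul, hyx, hyx2, neg_sub]

theorem Commute.sub_sq_right {A : Type*} [Ring A] {a b : A} (h : Commute a b) :
    Commute a (b - b ^ 2) :=
  h.sub_right (h.pow_right 2)

namespace Subalgebra

variable {R A : Type*} [CommRing R] [Ring A] [Algebra R A] (S : Subalgebra R A)

theorem pow_mem_of_sq_add_mem {u : A} {N : ℕ} (hu : u ^ N = 0) (hS : u ^ 2 + u ∈ S) (m : ℕ) :
    u ^ m ∈ S := by
  induction hd : N - m using Nat.strong_induction_on generalizing m with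
  | _ d ih =>
  by_cases hm : N ≤ m
  · rw [pow_eq_zero_of_le hm hu]
    exact zero_mem S
  rw [eq_sub_of_add_eq (sq_add_self_pow u m).symm]
  refine sub_mem (pow_mem hS m) (sum_mem fun j _ => ?_)
  exact mul_mem (ih _ (by omega) _ rfl) (natCast_mem S _)

theorem mem_of_sub_sq_mem (p : ℕ) [ExpChar A p] {x : A} {n : ℕ} (hx : x ^ p ^ n = 1)
    (hS : x - x ^ 2 ∈ S) : x ∈ S := by
  have hu : (x - 1) ^ p ^ n = 0 := by
    rw [sub_pow_expChar_pow_of_commute p n (Commute.one_right x), hx, one_pow, sub_self]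
  have hw : (x - 1) ^ 2 + (x - 1) = -(x - x ^ 2) := by noncomm_ring
  simpa using add_mem (S.pow_mem_of_sq_add_mem hu (hw ▸ neg_mem hS) 1) (one_mem S)

end Subalgebra

theorem Algebra.adjoin_sub_sq_eq_adjoin {R A : Type*} [CommRing R] [Ring A] [Algebra R A]
    (p : ℕ) [ExpChar A p] {x y s : A} {m n : ℕ} (hx : x ^ p ^ m = 1) (hy : y ^ p ^ n = 1) :
    Algebra.adjoin R {x - x ^ 2, y - y ^ 2, s} = Algebra.adjoin R {x, y, s} := by
  apply le_antisymm <;> simp only [Algebra.adjoin_le_iff, Set.insert_subset_iff,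
    Set.singleton_subset_iff, SetLike.mem_coe]
  · refine ⟨sub_mem ?_ (pow_mem ?_ 2), sub_mem ?_ (pow_mem ?_ 2), ?_⟩ <;>
      exact Algebra.subset_adjoin (by simp)
  · refine ⟨Subalgebra.mem_of_sub_sq_mem _ p hx ?_, Subalgebra.mem_of_sub_sq_mem _ p hy ?_,
      ?_⟩ <;> exact Algebra.subset_adjoin (by simp)

theorem MonoidAlgebra.adjoin_image_of_eq_top {R M : Type*} [CommSemiring R] [Monoid M]
    {s : Set M} (hs : Submonoid.closure s = ⊤) :
    Algebra.adjoin R (MonoidAlgebra.of R M '' s) = ⊤ := by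
  rw [eq_top_iff]
  rintro f -
  induction f using MonoidAlgebra.induction_on with
  | of m =>
    have hm : m ∈ Submonoid.closure s := hs ▸ Submonoid.mem_top m
    induction hm using Submonoid.closure_induction with
    | mem m hm => exact Algebra.subset_adjoin ⟨m, hm, rfl⟩
    | one => rw [map_one]; exact one_mem _
    | mul a b _ _ ha hb => rw [map_mul]; exact mul_mem ha hb
  | add f g hf hg => exact add_mem hf hg
  | smul c f hf => exact Subalgebra.smul_mem _ hf c

theorem MonoidAlgebra.finrank_eq_card {R M : Type*} [Field R] [Monoid M] [Fintype M] :
    Module.finrank R (MonoidAlgebra R M) = Fintype.card M :=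
  (coeffLinearEquiv R).finrank_eq.trans (Module.finrank_finsupp_self R)

theorem Submonoid.closure_image_inl_union_image_inr {M N : Type*} [Monoid M] [Monoid N]
    {s : Set M} {t : Set N} (hs : closure s = ⊤) (ht : closure t = ⊤) :
    closure (MonoidHom.inl M N '' s ∪ MonoidHom.inr M N '' t) = ⊤ := by
  rw [closure_union, ← MonoidHom.map_mclosure, ← MonoidHom.map_mclosure, hs, ht,
    ← MonoidHom.mrange_eq_map, ← MonoidHom.mrange_eq_map, mrange_inl_sup_mrange_inr]

theorem Multiplicative.closure_ofAdd_one (n : ℕ) [NeZero n] :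
    Submonoid.closure {ofAdd (1 : ZMod n)} = ⊤ := by
  rw [eq_top_iff]
  intro a _
  have ha : a = ofAdd (1 : ZMod n) ^ (toAdd a).val := by
    rw [← ofAdd_nsmul, nsmul_one, ZMod.natCast_zmod_val, ofAdd_toAdd]
  rw [ha]
  exact Submonoid.pow_mem _ (Submonoid.subset_closure (Set.mem_singleton _)) _

theorem Multiplicative.ofAdd_one_pow_self (n : ℕ) : ofAdd (1 : ZMod n) ^ n = 1 := by
  rw [← ofAdd_nsmul, nsmul_one, ZMod.natCast_self, ofAdd_zero]

theorem Equiv.Perm.closure_finRotate_three_swap :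
    Submonoid.closure {finRotate 3, swap 0 1} = ⊤ := by
  have h : Subgroup.closure {finRotate 3, swap 0 1} = ⊤ := by
    simpa using closure_cycle_adjacent_swap (isCycle_finRotate (n := 1)) support_finRotate 0
  rw [← Subgroup.closure_toSubmonoid_of_finite, h, Subgroup.top_toSubmonoid]

theorem Equiv.Perm.finRotate_three_pow_three : finRotate 3 ^ 3 = 1 := by decide

theorem Equiv.Perm.swap_zero_one_mul_finRotate_three :
    swap (0 : Fin 3) 1 * finRotate 3 = finRotate 3 ^ 2 * swap 0 1 := by decide

theorem closure_ofAdd_one_finRotate_swap (n : ℕ) [NeZero n] :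
    Submonoid.closure
      {((Multiplicative.ofAdd 1, 1) : Multiplicative (ZMod n) × Equiv.Perm (Fin 3)),
        (1, finRotate 3), (1, Equiv.swap 0 1)} = ⊤ := by
  simpa only [Set.image_insert_eq, Set.image_singleton, Set.singleton_union, MonoidHom.inl_apply,
    MonoidHom.inr_apply] using
    Submonoid.closure_image_inl_union_image_inr (Multiplicative.closure_ofAdd_one n)
      Equiv.Perm.closure_finRotate_three_swap

theorem stmt9_general (k : Type) [Field k] [CharP k 3] (r : ℕ) :
    let G := Multiplicative (ZMod (3 ^ r)) × Equiv.Perm (Fin 3)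
    let g : G := (Multiplicative.ofAdd (1 : ZMod (3 ^ r)), 1)
    let h : G := (1, finRotate 3)
    let t : G := (1, Equiv.swap 0 1)
    let Z : MonoidAlgebra k G := MonoidAlgebra.of k G g - MonoidAlgebra.of k G (g * g)
    let Y : MonoidAlgebra k G := MonoidAlgebra.of k G h - MonoidAlgebra.of k G (h * h)
    let T : MonoidAlgebra k G := MonoidAlgebra.of k G t
    Z ^ (3 ^ r) = 0 ∧ Y ^ 3 = 0 ∧ Z * Y = Y * Z ∧ T * Z = Z * T ∧
      T * Y = -(Y * T) ∧ T ^ 2 = 1 ∧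
      Algebra.adjoin k {Z, Y, T} = (⊤ : Subalgebra k (MonoidAlgebra k G)) ∧
      Module.finrank k (MonoidAlgebra k G) = 6 * 3 ^ r := by
  intro G g h t Z Y T
  have : Fact (Nat.Prime 3) := ⟨Nat.prime_three⟩
  have : CharP (MonoidAlgebra k G) 3 := charP_of_injective_algebraMap' k 3
  let ι := MonoidAlgebra.of k G
  let ι₁ := ι.comp (MonoidHom.inl _ (Equiv.Perm (Fin 3)))
  let ι₂ := ι.comp (MonoidHom.inr (Multiplicative (ZMod (3 ^ r))) _)
  have hZ : Z = ι g - ι g ^ 2 := by rw [sq, ← map_mul]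
  have hY : Y = ι h - ι h ^ 2 := by rw [sq, ← map_mul]
  have hg : ι g ^ 3 ^ r = 1 := show ι₁ _ ^ _ = 1 by
    rw [← map_pow, Multiplicative.ofAdd_one_pow_self, map_one]
  have hh : ι h ^ 3 ^ 1 = 1 := show ι₂ _ ^ _ = 1 by
    rw [← map_pow, pow_one, Equiv.Perm.finRotate_three_pow_three, map_one]
  have hth : T * ι h = ι h ^ 2 * T := show ι₂ _ * ι₂ _ = ι₂ _ ^ 2 * ι₂ _ by
    rw [← map_pow, ← map_mul, ← map_mul, Equiv.Perm.swap_zero_one_mul_finRotate_three]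
  have hgh : Commute (ι g) (ι h) := (MonoidHom.commute_inl_inr _ _).map ι
  have htg : Commute T (ι g) := ((MonoidHom.commute_inl_inr _ _).map ι).symm
  refine ⟨hZ ▸ sub_sq_pow_expChar_pow_eq_zero 3 hg, hY ▸ sub_sq_pow_expChar_pow_eq_zero 3 hh,
    hZ ▸ hY ▸ (hgh.sub_sq_right.symm.sub_sq_right.symm).eq, hZ ▸ htg.sub_sq_right.eq,
    hY ▸ mul_sub_sq_eq_neg_sub_sq_mul (by rwa [pow_one] at hh) hth,
    show ι₂ _ ^ 2 = 1 by rw [← map_pow, sq, Equiv.swap_mul_self, map_one], ?_, ?_⟩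
  · have hgen := MonoidAlgebra.adjoin_image_of_eq_top (R := k)
      (closure_ofAdd_one_finRotate_swap (3 ^ r))
    simp only [Set.image_insert_eq, Set.image_singleton] at hgen
    rw [hZ, hY, Algebra.adjoin_sub_sq_eq_adjoin 3 hg hh, hgen]
  · rw [MonoidAlgebra.finrank_eq_card, Fintype.card_prod]
    simp [Fintype.card_perm, Nat.factorial_succ, mul_comm]

/-- Let `k` be a field of characteristic `3`, `r ≥ 1`, and
`G = ℤ/3^r × Σ₃` with `C = ⟨g⟩` cyclic of order `3^r` and `Σ₃ = ⟨h, t⟩` where `h` is a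
3-cycle and `t` a transposition.  Set `Z = g - g²` and `Y = h - h²` in `kG`, and
`T = t`.  Then `kG` is generated as a `k`-algebra by `Z, Y, T`, these satisfy the
relations `Z^{3^r} = 0`, `Y³ = 0`, `ZY = YZ`, `TZ = ZT`, `TY = -YT`, `T² = 1`, and
`kG` has dimension `6·3^r` (so these relations form a presentation of `kG`). -/
theorem stmt9 (k : Type) [Field k] [CharP k 3] (r : ℕ) (hr : 1 ≤ r) :
    let G := Multiplicative (ZMod (3 ^ r)) × Equiv.Perm (Fin 3)
    let g : G := (Multiplicative.ofAdd (1 : ZMod (3 ^ r)), 1)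
    let h : G := (1, finRotate 3)
    let t : G := (1, Equiv.swap 0 1)
    let Z : MonoidAlgebra k G := MonoidAlgebra.of k G g - MonoidAlgebra.of k G (g * g)
    let Y : MonoidAlgebra k G := MonoidAlgebra.of k G h - MonoidAlgebra.of k G (h * h)
    let T : MonoidAlgebra k G := MonoidAlgebra.of k G t
    Z ^ (3 ^ r) = 0 ∧ Y ^ 3 = 0 ∧ Z * Y = Y * Z ∧ T * Z = Z * T ∧
      T * Y = -(Y * T) ∧ T ^ 2 = 1 ∧
      Algebra.adjoin k {Z, Y, T} = (⊤ : Subalgebra k (MonoidAlgebra k G)) ∧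
      Module.finrank k (MonoidAlgebra k G) = 6 * 3 ^ r :=
  stmt9_general k r
end
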